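/- arXiv:1003.2047 — 6 statements merged into one kernel-verified Lean document; each statement's English description precedes it below -/
import Mathlib

section
/- Let V be a finite set partitioned into five pairwise disjoint subsets X₀, X₁, X₂, X₃, X₄ with |X₀| = n − r, |X₁| = 1, |X₂| = r, |X₃| = 1, |X₄| = 1, where n, r are integers with 1 ≤ r ≤ n − 1, and for i ∈ ℤ/5ℤ set Yᵢ = Xᵢ ∪ Xᵢ₊₁ (indices modulo 5). Then the number of n-element subsets S ⊆ V such that Yᵢ ⊄ S for every i equals 2rn − 2r² + n + 1. -/
set_option maxHeartbeats 2000000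


/-- Let `V` (here: the type `α`) be a finite set partitioned into five
pairwise disjoint subsets `X 0, …, X 4` with `|X 0| = n - r`, `|X 1| = 1`, `|X 2| = r`,
`|X 3| = 1`, `|X 4| = 1`, where `1 ≤ r ≤ n - 1`, and `Y i = X i ∪ X (i+1)` (indices mod 5).
Then the number of `n`-element subsets `S ⊆ V` with `Y i ⊄ S` for every `i` equals
`2rn - 2r² + n + 1`. -/
theorem maximal_cone_count {α : Type*} [Fintype α] [DecidableEq α]
    (n r : ℕ) (hr : 1 ≤ r) (hrn : r + 1 ≤ n)
    (X : Fin 5 → Finset α)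
    (hdisj : ∀ i j : Fin 5, i ≠ j → Disjoint (X i) (X j))
    (hcover : ∀ a : α, ∃ i : Fin 5, a ∈ X i)
    (h0 : (X 0).card = n - r) (h1 : (X 1).card = 1) (h2 : (X 2).card = r)
    (h3 : (X 3).card = 1) (h4 : (X 4).card = 1) :
    ({S : Finset α | S.card = n ∧ ∀ i : Fin 5, ¬ (X i ∪ X (i + 1)) ⊆ S}.ncard : ℤ)
      = 2 * r * n - 2 * r ^ 2 + n + 1 := by
  classical
  obtain ⟨b, hb⟩ := Finset.card_eq_one.mp h1
  obtain ⟨d, hd⟩ := Finset.card_eq_one.mp h3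
  obtain ⟨e, he⟩ := Finset.card_eq_one.mp h4
  have hne : ∀ {u v : α} {i j : Fin 5}, u ∈ X i → v ∈ X j → i ≠ j → u ≠ v := by
    intro u v i j hu hv hij huv
    subst huv
    exact (Finset.disjoint_left.mp (hdisj i j hij) hu) hv
  have hbX : b ∈ X 1 := by rw [hb]; simp
  have hdX : d ∈ X 3 := by rw [hd]; simp
  have heX : e ∈ X 4 := by rw [he]; simp
  have hbd : b ≠ d := hne hbX hdX (by decide)
  have hbe : b ≠ e := hne hbX heX (by decide)
  have hde : d ≠ e := hne hdX heX (by decide)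
  have hAb : ∀ x ∈ X 0, x ≠ b := fun x hx => hne hx hbX (by decide)
  have hAd : ∀ x ∈ X 0, x ≠ d := fun x hx => hne hx hdX (by decide)
  have hAe : ∀ x ∈ X 0, x ≠ e := fun x hx => hne hx heX (by decide)
  have hCb : ∀ y ∈ X 2, y ≠ b := fun y hy => hne hy hbX (by decide)
  have hCd : ∀ y ∈ X 2, y ≠ d := fun y hy => hne hy hdX (by decide)
  have hCe : ∀ y ∈ X 2, y ≠ e := fun y hy => hne hy heX (by decide)
  have hAC : ∀ x ∈ X 0, ∀ y ∈ X 2, x ≠ y := fun x hx y hy => hne hx hy (by decide)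
  -- the family of complements
  set F : Finset (Finset α) :=
    (({({b, d, e} : Finset α)} : Finset (Finset α))
      ∪ (X 0).image (fun x => {x, b, d})
      ∪ (X 2).image (fun y => {y, b, e})
      ∪ ((X 0) ×ˢ (X 2)).image (fun p => {p.1, p.2, d})
      ∪ ((X 0) ×ˢ (X 2)).image (fun p => {p.1, p.2, e})) with hF
  -- cardinality of the ambient type
  have hcard_univ : Fintype.card α = n + 3 := by
    have huniv : (Finset.univ : Finset α) = Finset.univ.biUnion (fun i => X i) := by
      ext a
      simp only [Finset.mem_univ, Finset.mem_biUnion, true_and, true_iff]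
      exact hcover a
    have : Fintype.card α = ∑ i : Fin 5, (X i).card := by
      rw [← Finset.card_univ, huniv]
      exact Finset.card_biUnion (fun i _ j _ hij => hdisj i j hij)
    rw [this, Fin.sum_univ_five, h0, h1, h2, h3, h4]
    omega
  -- main characterization
  have main : ∀ T : Finset α,
      (T.card = 3 ∧ ∀ i : Fin 5, ((X i ∪ X (i + 1)) ∩ T).Nonempty) ↔ T ∈ F := by
    intro T
    constructor
    · rintro ⟨hT3, hhit⟩
      -- counts
      have hTun : T = Finset.univ.biUnion (fun i => T ∩ X i) := by
        ext a
        simp only [Finset.mem_biUnion, Finset.mem_univ, Finset.mem_inter, true_and]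
        constructor
        · intro ha
          obtain ⟨i, hi⟩ := hcover a
          exact ⟨i, ha, hi⟩
        · rintro ⟨i, ha, _⟩; exact ha
      have hsum : (T ∩ X 0).card + (T ∩ X 1).card + (T ∩ X 2).card + (T ∩ X 3).card
          + (T ∩ X 4).card = 3 := by
        have hc : T.card = ∑ i : Fin 5, (T ∩ X i).card := by
          conv_lhs => rw [hTun]
          exact Finset.card_biUnion (fun i _ j _ hij =>
            (hdisj i j hij).mono Finset.inter_subset_right Finset.inter_subset_right)
        rw [hT3, Fin.sum_univ_five] at hc
        omega
      have hub : ∀ i : Fin 5, (T ∩ X i).card ≤ (X i).card :=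
        fun i => Finset.card_le_card Finset.inter_subset_right
      have hpair : ∀ i : Fin 5, 1 ≤ (T ∩ X i).card + (T ∩ X (i + 1)).card := by
        intro i
        obtain ⟨a, ha⟩ := hhit i
        rw [Finset.mem_inter, Finset.mem_union] at ha
        rcases ha.1 with h | h
        · have : 0 < (T ∩ X i).card :=
            Finset.card_pos.mpr ⟨a, Finset.mem_inter.mpr ⟨ha.2, h⟩⟩
          omega
        · have : 0 < (T ∩ X (i + 1)).card :=
            Finset.card_pos.mpr ⟨a, Finset.mem_inter.mpr ⟨ha.2, h⟩⟩
          omega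
      have p0 : 1 ≤ (T ∩ X 0).card + (T ∩ X 1).card := hpair 0
      have p1 : 1 ≤ (T ∩ X 1).card + (T ∩ X 2).card := hpair 1
      have p2 : 1 ≤ (T ∩ X 2).card + (T ∩ X 3).card := hpair 2
      have p3 : 1 ≤ (T ∩ X 3).card + (T ∩ X 4).card := hpair 3
      have p4 : 1 ≤ (T ∩ X 4).card + (T ∩ X 0).card := hpair 4
      have u1 : (T ∩ X 1).card ≤ 1 := by have := hub 1; omega
      have u3 : (T ∩ X 3).card ≤ 1 := by have := hub 3; omega
      have u4 : (T ∩ X 4).card ≤ 1 := by have := hub 4; omega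
      -- the possible distributions
      have key :
          ((T ∩ X 0).card = 0 ∧ (T ∩ X 1).card = 1 ∧ (T ∩ X 2).card = 0 ∧
            (T ∩ X 3).card = 1 ∧ (T ∩ X 4).card = 1) ∨
          ((T ∩ X 0).card = 1 ∧ (T ∩ X 1).card = 1 ∧ (T ∩ X 2).card = 0 ∧
            (T ∩ X 3).card = 1 ∧ (T ∩ X 4).card = 0) ∨
          ((T ∩ X 0).card = 0 ∧ (T ∩ X 1).card = 1 ∧ (T ∩ X 2).card = 1 ∧
            (T ∩ X 3).card = 0 ∧ (T ∩ X 4).card = 1) ∨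
          ((T ∩ X 0).card = 1 ∧ (T ∩ X 1).card = 0 ∧ (T ∩ X 2).card = 1 ∧
            (T ∩ X 3).card = 1 ∧ (T ∩ X 4).card = 0) ∨
          ((T ∩ X 0).card = 1 ∧ (T ∩ X 1).card = 0 ∧ (T ∩ X 2).card = 1 ∧
            (T ∩ X 3).card = 0 ∧ (T ∩ X 4).card = 1) := by
        omega
      -- reconstruct T
      have hTun' : T = (T ∩ X 0) ∪ (T ∩ X 1) ∪ (T ∩ X 2) ∪ (T ∩ X 3) ∪ (T ∩ X 4) := by
        ext a
        simp only [Finset.mem_union, Finset.mem_inter]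
        constructor
        · intro ha
          obtain ⟨i, hi⟩ := hcover a
          fin_cases i
          · exact Or.inl (Or.inl (Or.inl (Or.inl ⟨ha, hi⟩)))
          · exact Or.inl (Or.inl (Or.inl (Or.inr ⟨ha, hi⟩)))
          · exact Or.inl (Or.inl (Or.inr ⟨ha, hi⟩))
          · exact Or.inl (Or.inr ⟨ha, hi⟩)
          · exact Or.inr ⟨ha, hi⟩
        · rintro ((((⟨h, -⟩ | ⟨h, -⟩) | ⟨h, -⟩) | ⟨h, -⟩) | ⟨h, -⟩) <;> exact h
      have piece1 : ∀ k : Fin 5, (T ∩ X k).card = 0 → T ∩ X k = ∅ :=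
        fun k hk => Finset.card_eq_zero.mp hk
      have pieceb : (T ∩ X 1).card = 1 → T ∩ X 1 = {b} := by
        intro h
        have hsub : T ∩ X 1 ⊆ {b} := by rw [← hb]; exact Finset.inter_subset_right
        exact Finset.eq_of_subset_of_card_le hsub (by simp [h])
      have pieced : (T ∩ X 3).card = 1 → T ∩ X 3 = {d} := by
        intro h
        have hsub : T ∩ X 3 ⊆ {d} := by rw [← hd]; exact Finset.inter_subset_right
        exact Finset.eq_of_subset_of_card_le hsub (by simp [h])
      have piecee : (T ∩ X 4).card = 1 → T ∩ X 4 = {e} := by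
        intro h
        have hsub : T ∩ X 4 ⊆ {e} := by rw [← he]; exact Finset.inter_subset_right
        exact Finset.eq_of_subset_of_card_le hsub (by simp [h])
      have pieceA : (T ∩ X 0).card = 1 → ∃ x ∈ X 0, T ∩ X 0 = {x} := by
        intro h
        obtain ⟨x, hx⟩ := Finset.card_eq_one.mp h
        refine ⟨x, ?_, hx⟩
        have : x ∈ T ∩ X 0 := by rw [hx]; simp
        exact (Finset.mem_inter.mp this).2
      have pieceC : (T ∩ X 2).card = 1 → ∃ y ∈ X 2, T ∩ X 2 = {y} := by
        intro h
        obtain ⟨y, hy⟩ := Finset.card_eq_one.mp h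
        refine ⟨y, ?_, hy⟩
        have : y ∈ T ∩ X 2 := by rw [hy]; simp
        exact (Finset.mem_inter.mp this).2
      rcases key with ⟨k0, k1, k2, k3, k4⟩ | ⟨k0, k1, k2, k3, k4⟩ | ⟨k0, k1, k2, k3, k4⟩ |
        ⟨k0, k1, k2, k3, k4⟩ | ⟨k0, k1, k2, k3, k4⟩
      · -- T = {b, d, e}
        have hT : T = {b, d, e} := by
          rw [hTun', piece1 0 k0, piece1 2 k2, pieceb k1, pieced k3, piecee k4]
          ext a; simp; try tauto
        rw [hF]
        simp only [Finset.mem_union, Finset.mem_singleton]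
        exact Or.inl (Or.inl (Or.inl (Or.inl hT)))
      · -- T = {x, b, d}
        obtain ⟨x, hxA, hx⟩ := pieceA k0
        have hT : T = {x, b, d} := by
          rw [hTun', piece1 2 k2, piece1 4 k4, hx, pieceb k1, pieced k3]
          ext a; simp; try tauto
        rw [hF]
        simp only [Finset.mem_union, Finset.mem_image, Finset.mem_singleton]
        exact Or.inl (Or.inl (Or.inl (Or.inr ⟨x, hxA, hT.symm⟩)))
      · -- T = {y, b, e}
        obtain ⟨y, hyC, hy⟩ := pieceC k2
        have hT : T = {y, b, e} := by
          rw [hTun', piece1 0 k0, piece1 3 k3, hy, pieceb k1, piecee k4]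
          ext a; simp; try tauto
        rw [hF]
        simp only [Finset.mem_union, Finset.mem_image, Finset.mem_singleton]
        exact Or.inl (Or.inl (Or.inr ⟨y, hyC, hT.symm⟩))
      · -- T = {x, y, d}
        obtain ⟨x, hxA, hx⟩ := pieceA k0
        obtain ⟨y, hyC, hy⟩ := pieceC k2
        have hT : T = {x, y, d} := by
          rw [hTun', piece1 1 k1, piece1 4 k4, hx, hy, pieced k3]
          ext a; simp; try tauto
        rw [hF]
        simp only [Finset.mem_union, Finset.mem_image, Finset.mem_product]
        exact Or.inl (Or.inr ⟨(x, y), ⟨hxA, hyC⟩, hT.symm⟩)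
      · -- T = {x, y, e}
        obtain ⟨x, hxA, hx⟩ := pieceA k0
        obtain ⟨y, hyC, hy⟩ := pieceC k2
        have hT : T = {x, y, e} := by
          rw [hTun', piece1 1 k1, piece1 3 k3, hx, hy, piecee k4]
          ext a; simp; try tauto
        rw [hF]
        simp only [Finset.mem_union, Finset.mem_image, Finset.mem_product]
        exact Or.inr ⟨(x, y), ⟨hxA, hyC⟩, hT.symm⟩
    · -- easy direction
      intro hT
      rw [hF] at hT
      simp only [Finset.mem_union, Finset.mem_image, Finset.mem_singleton,
        Finset.mem_product] at hT
      rcases hT with ((((hT | ⟨x, hxA, hT⟩) | ⟨y, hyC, hT⟩) | ⟨⟨x, y⟩, ⟨hxA, hyC⟩, hT⟩) |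
        ⟨⟨x, y⟩, ⟨hxA, hyC⟩, hT⟩)
      · subst hT
        constructor
        · rw [Finset.card_insert_of_notMem (by simp [hbd, hbe]),
            Finset.card_insert_of_notMem (by simp [hde])]
          simp
        · intro i
          fin_cases i
          · exact ⟨b, by simp [hbX]⟩
          · exact ⟨b, by simp [hbX]⟩
          · exact ⟨d, by simp [hdX]⟩
          · exact ⟨d, by simp [hdX]⟩
          · exact ⟨e, by simp [heX]⟩
      · subst hT
        have hxb := hAb x hxA
        have hxd := hAd x hxA
        constructor
        · rw [Finset.card_insert_of_notMem (by simp [hxb, hxd]),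
            Finset.card_insert_of_notMem (by simp [hbd])]
          simp
        · intro i
          fin_cases i
          · exact ⟨x, by simp [hxA]⟩
          · exact ⟨b, by simp [hbX]⟩
          · exact ⟨d, by simp [hdX]⟩
          · exact ⟨d, by simp [hdX]⟩
          · exact ⟨x, by simp [hxA]⟩
      · subst hT
        have hyb := hCb y hyC
        have hye := hCe y hyC
        constructor
        · rw [Finset.card_insert_of_notMem (by simp [hyb, hye]),
            Finset.card_insert_of_notMem (by simp [hbe])]
          simp
        · intro i
          fin_cases i
          · exact ⟨b, by simp [hbX]⟩
          · exact ⟨y, by simp [hyC]⟩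
          · exact ⟨y, by simp [hyC]⟩
          · exact ⟨e, by simp [heX]⟩
          · exact ⟨e, by simp [heX]⟩
      · subst hT
        have hxy := hAC x hxA y hyC
        have hxd := hAd x hxA
        have hyd := hCd y hyC
        constructor
        · rw [Finset.card_insert_of_notMem (by simp [hxy, hxd]),
            Finset.card_insert_of_notMem (by simp [hyd])]
          simp
        · intro i
          fin_cases i
          · exact ⟨x, by simp [hxA]⟩
          · exact ⟨y, by simp [hyC]⟩
          · exact ⟨y, by simp [hyC]⟩
          · exact ⟨d, by simp [hdX]⟩
          · exact ⟨x, by simp [hxA]⟩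
      · subst hT
        have hxy := hAC x hxA y hyC
        have hxe := hAe x hxA
        have hye := hCe y hyC
        constructor
        · rw [Finset.card_insert_of_notMem (by simp [hxy, hxe]),
            Finset.card_insert_of_notMem (by simp [hye])]
          simp
        · intro i
          fin_cases i
          · exact ⟨x, by simp [hxA]⟩
          · exact ⟨y, by simp [hyC]⟩
          · exact ⟨y, by simp [hyC]⟩
          · exact ⟨e, by simp [heX]⟩
          · exact ⟨e, by simp [heX]⟩
  -- the set in question equals the image of F under complement
  have hset : {S : Finset α | S.card = n ∧ ∀ i : Fin 5, ¬ (X i ∪ X (i + 1)) ⊆ S}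
      = ↑(F.image (fun T => Tᶜ)) := by
    ext S
    simp only [Set.mem_setOf_eq, Finset.coe_image, Set.mem_image, Finset.mem_coe]
    constructor
    · rintro ⟨hSn, hSi⟩
      refine ⟨Sᶜ, ?_, by simp⟩
      rw [← main]
      constructor
      · rw [Finset.card_compl, hSn, hcard_univ]; omega
      · intro i
        obtain ⟨a, haY, haS⟩ := Finset.not_subset.mp (hSi i)
        exact ⟨a, Finset.mem_inter.mpr ⟨haY, Finset.mem_compl.mpr haS⟩⟩
    · rintro ⟨T, hTF, rfl⟩
      rw [← main] at hTF
      obtain ⟨hT3, hhit⟩ := hTF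
      constructor
      · rw [Finset.card_compl, hT3, hcard_univ]; omega
      · intro i
        obtain ⟨a, ha⟩ := hhit i
        rw [Finset.mem_inter] at ha
        exact Finset.not_subset.mpr ⟨a, ha.1, by simpa using ha.2⟩
  rw [hset, Set.ncard_coe_finset, Finset.card_image_of_injective _ compl_injective]
  -- compute |F|
  have hdisjF : ∀ (G H : Finset (Finset α)) (m : α),
      (∀ T ∈ G, m ∈ T) → (∀ T ∈ H, m ∉ T) → Disjoint G H := by
    intro G H m hG hH
    rw [Finset.disjoint_left]
    intro T hTG hTH
    exact hH T hTH (hG T hTG)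
  -- cardinalities of the five pieces
  have hrle : r ≤ n := by omega
  have c1 : (({({b, d, e} : Finset α)} : Finset (Finset α))).card = 1 :=
    Finset.card_singleton _
  have c2 : ((X 0).image fun x => ({x, b, d} : Finset α)).card = n - r := by
    rw [Finset.card_image_of_injOn, h0]
    intro x hx x' hx' hxx
    have hxx' : ({x, b, d} : Finset α) = {x', b, d} := hxx
    have hx1 : x ∈ ({x', b, d} : Finset α) := by rw [← hxx']; simp
    simp only [Finset.mem_insert, Finset.mem_singleton] at hx1
    rcases hx1 with h | h | h
    · exact h
    · exact absurd h (hAb x hx)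
    · exact absurd h (hAd x hx)
  have c3 : ((X 2).image fun y => ({y, b, e} : Finset α)).card = r := by
    rw [Finset.card_image_of_injOn, h2]
    intro y hy y' hy' hyy
    have hyy' : ({y, b, e} : Finset α) = {y', b, e} := hyy
    have hy1 : y ∈ ({y', b, e} : Finset α) := by rw [← hyy']; simp
    simp only [Finset.mem_insert, Finset.mem_singleton] at hy1
    rcases hy1 with h | h | h
    · exact h
    · exact absurd h (hCb y hy)
    · exact absurd h (hCe y hy)
  have injprod : ∀ w : α, (∀ x ∈ X 0, x ≠ w) → (∀ y ∈ X 2, y ≠ w) →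
      Set.InjOn (fun p : α × α => ({p.1, p.2, w} : Finset α)) ↑((X 0) ×ˢ (X 2)) := by
    intro w hAw hCw p hp q hq hpq
    simp only [Finset.mem_coe, Finset.mem_product] at hp hq
    obtain ⟨hp1, hp2⟩ := hp
    obtain ⟨hq1, hq2⟩ := hq
    have hpq' : ({p.1, p.2, w} : Finset α) = {q.1, q.2, w} := hpq
    have h1 : p.1 ∈ ({q.1, q.2, w} : Finset α) := by rw [← hpq']; simp
    have h2 : p.2 ∈ ({q.1, q.2, w} : Finset α) := by rw [← hpq']; simp
    simp only [Finset.mem_insert, Finset.mem_singleton] at h1 h2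
    have e1 : p.1 = q.1 := by
      rcases h1 with h | h | h
      · exact h
      · exact absurd h (hAC p.1 hp1 q.2 hq2)
      · exact absurd h (hAw p.1 hp1)
    have e2 : p.2 = q.2 := by
      rcases h2 with h | h | h
      · exact absurd h.symm (hAC q.1 hq1 p.2 hp2)
      · exact h
      · exact absurd h (hCw p.2 hp2)
    exact Prod.ext e1 e2
  have c4 : (((X 0) ×ˢ (X 2)).image fun p : α × α => ({p.1, p.2, d} : Finset α)).card
      = (n - r) * r := by
    rw [Finset.card_image_of_injOn (injprod d hAd hCd), Finset.card_product, h0, h2]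
  have c5 : (((X 0) ×ˢ (X 2)).image fun p : α × α => ({p.1, p.2, e} : Finset α)).card
      = (n - r) * r := by
    rw [Finset.card_image_of_injOn (injprod e hAe hCe), Finset.card_product, h0, h2]
  -- markers
  have m1 : ∀ T ∈ (({({b, d, e} : Finset α)} : Finset (Finset α))),
      b ∈ T ∧ d ∈ T ∧ e ∈ T := by
    intro T hT
    rw [Finset.mem_singleton] at hT
    subst hT
    refine ⟨by simp, by simp, by simp⟩
  have m2 : ∀ T ∈ (X 0).image (fun x => ({x, b, d} : Finset α)),
      b ∈ T ∧ d ∈ T ∧ e ∉ T := by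
    intro T hT
    obtain ⟨x, hx, rfl⟩ := Finset.mem_image.mp hT
    refine ⟨by simp, by simp, ?_⟩
    simp only [Finset.mem_insert, Finset.mem_singleton]
    push_neg
    exact ⟨Ne.symm (hAe x hx), Ne.symm hbe, Ne.symm hde⟩
  have m3 : ∀ T ∈ (X 2).image (fun y => ({y, b, e} : Finset α)),
      b ∈ T ∧ e ∈ T ∧ d ∉ T := by
    intro T hT
    obtain ⟨y, hy, rfl⟩ := Finset.mem_image.mp hT
    refine ⟨by simp, by simp, ?_⟩
    simp only [Finset.mem_insert, Finset.mem_singleton]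
    push_neg
    exact ⟨Ne.symm (hCd y hy), hbd.symm, hde⟩
  have m4 : ∀ T ∈ ((X 0) ×ˢ (X 2)).image (fun p : α × α => ({p.1, p.2, d} : Finset α)),
      d ∈ T ∧ b ∉ T ∧ e ∉ T := by
    intro T hT
    obtain ⟨p, hp, rfl⟩ := Finset.mem_image.mp hT
    rw [Finset.mem_product] at hp
    refine ⟨by simp, ?_, ?_⟩
    · simp only [Finset.mem_insert, Finset.mem_singleton]
      push_neg
      exact ⟨Ne.symm (hAb p.1 hp.1), Ne.symm (hCb p.2 hp.2), hbd⟩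
    · simp only [Finset.mem_insert, Finset.mem_singleton]
      push_neg
      exact ⟨Ne.symm (hAe p.1 hp.1), Ne.symm (hCe p.2 hp.2), Ne.symm hde⟩
  have m5 : ∀ T ∈ ((X 0) ×ˢ (X 2)).image (fun p : α × α => ({p.1, p.2, e} : Finset α)),
      e ∈ T ∧ b ∉ T ∧ d ∉ T := by
    intro T hT
    obtain ⟨p, hp, rfl⟩ := Finset.mem_image.mp hT
    rw [Finset.mem_product] at hp
    refine ⟨by simp, ?_, ?_⟩
    · simp only [Finset.mem_insert, Finset.mem_singleton]
      push_neg
      exact ⟨Ne.symm (hAb p.1 hp.1), Ne.symm (hCb p.2 hp.2), hbe⟩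
    · simp only [Finset.mem_insert, Finset.mem_singleton]
      push_neg
      exact ⟨Ne.symm (hAd p.1 hp.1), Ne.symm (hCd p.2 hp.2), hde⟩
  -- pairwise disjointness
  have d12 := hdisjF _ _ e (fun T h => (m1 T h).2.2) (fun T h => (m2 T h).2.2)
  have d13 := hdisjF _ _ d (fun T h => (m1 T h).2.1) (fun T h => (m3 T h).2.2)
  have d14 := hdisjF _ _ b (fun T h => (m1 T h).1) (fun T h => (m4 T h).2.1)
  have d15 := hdisjF _ _ b (fun T h => (m1 T h).1) (fun T h => (m5 T h).2.1)
  have d23 := hdisjF _ _ d (fun T h => (m2 T h).2.1) (fun T h => (m3 T h).2.2)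
  have d24 := hdisjF _ _ b (fun T h => (m2 T h).1) (fun T h => (m4 T h).2.1)
  have d25 := hdisjF _ _ b (fun T h => (m2 T h).1) (fun T h => (m5 T h).2.1)
  have d34 := hdisjF _ _ b (fun T h => (m3 T h).1) (fun T h => (m4 T h).2.1)
  have d35 := hdisjF _ _ b (fun T h => (m3 T h).1) (fun T h => (m5 T h).2.1)
  have d45 := hdisjF _ _ d (fun T h => (m4 T h).1) (fun T h => (m5 T h).2.2)
  have D2 : Disjoint
      (({({b, d, e} : Finset α)} : Finset (Finset α)))
      ((X 0).image (fun x => ({x, b, d} : Finset α))) := d12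
  have D3 := Finset.disjoint_union_left.mpr ⟨d13, d23⟩
  have D4 := Finset.disjoint_union_left.mpr ⟨Finset.disjoint_union_left.mpr ⟨d14, d24⟩, d34⟩
  have D5 := Finset.disjoint_union_left.mpr
    ⟨Finset.disjoint_union_left.mpr ⟨Finset.disjoint_union_left.mpr ⟨d15, d25⟩, d35⟩, d45⟩
  have hFcard : F.card = 1 + (n - r) + r + (n - r) * r + (n - r) * r := by
    rw [hF, Finset.card_union_of_disjoint D5, Finset.card_union_of_disjoint D4,
      Finset.card_union_of_disjoint D3, Finset.card_union_of_disjoint D2,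
      c1, c2, c3, c4, c5]
  rw [hFcard]
  push_cast [Nat.cast_sub hrle]
  ring
end

section
/- The set Diff = {d₁ − d₂ : d₁, d₂ ∈ Col} of all differences of two elements of Col equals the union Diff₁ ∪ Diff₂ ∪ Diff₃. -/
/-- `Col₁ = {(-s, -s, q - b·s - (n-r)) : 0 ≤ s ≤ r, 0 ≤ q ≤ n-r}`, recording coefficients of
`D_t, D_y, D_v` in the Picard group. -/
def Col1 (n r b : ℤ) : Set (ℤ × ℤ × ℤ) :=
  {p | ∃ s q : ℤ, 0 ≤ s ∧ s ≤ r ∧ 0 ≤ q ∧ q ≤ n - r ∧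
    p = (-s, -s, q - b * s - (n - r))}

/-- `Col₂ = {(-s, -(s-1), q - b·s - (n-r)) : 1 ≤ s ≤ r, 0 ≤ q ≤ n-r-1}`. -/
def Col2 (n r b : ℤ) : Set (ℤ × ℤ × ℤ) :=
  {p | ∃ s q : ℤ, 1 ≤ s ∧ s ≤ r ∧ 0 ≤ q ∧ q ≤ n - r - 1 ∧
    p = (-s, -(s - 1), q - b * s - (n - r))}

/-- `Col = Col₁ ∪ Col₂`. -/
def Col (n r b : ℤ) : Set (ℤ × ℤ × ℤ) := Col1 n r b ∪ Col2 n r b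

/-- `Diff₁ = {(s, s, b·s + q) : -r ≤ s ≤ r, r-n ≤ q ≤ n-r}`. -/
def Diff1 (n r b : ℤ) : Set (ℤ × ℤ × ℤ) :=
  {p | ∃ s q : ℤ, -r ≤ s ∧ s ≤ r ∧ r - n ≤ q ∧ q ≤ n - r ∧
    p = (s, s, b * s + q)}

/-- `Diff₂ = {(s, s-1, b·s + q) : 1-r ≤ s ≤ r, r-n+1 ≤ q ≤ n-r}`. -/
def Diff2 (n r b : ℤ) : Set (ℤ × ℤ × ℤ) :=
  {p | ∃ s q : ℤ, 1 - r ≤ s ∧ s ≤ r ∧ r - n + 1 ≤ q ∧ q ≤ n - r ∧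
    p = (s, s - 1, b * s + q)}

/-- `Diff₃ = {(s, s+1, b·s + q) : -r ≤ s ≤ r-1, r-n ≤ q ≤ n-r-1}`. -/
def Diff3 (n r b : ℤ) : Set (ℤ × ℤ × ℤ) :=
  {p | ∃ s q : ℤ, -r ≤ s ∧ s ≤ r - 1 ∧ r - n ≤ q ∧ q ≤ n - r - 1 ∧
    p = (s, s + 1, b * s + q)}

/-- The set `Diff = {d₁ - d₂ : d₁, d₂ ∈ Col}` of all differences of two
elements of `Col` equals `Diff₁ ∪ Diff₂ ∪ Diff₃`. -/
theorem diff_of_col (n r b : ℤ) (hr : 1 ≤ r) (hrn : r ≤ n - 1) (hb : 0 ≤ b) :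
    {p | ∃ d₁ ∈ Col n r b, ∃ d₂ ∈ Col n r b, p = d₁ - d₂}
      = Diff1 n r b ∪ Diff2 n r b ∪ Diff3 n r b := by
  ext p
  simp only [Set.mem_setOf_eq, Set.mem_union, Col, Col1, Col2, Diff1, Diff2, Diff3]
  constructor
  · rintro ⟨d₁, h₁, d₂, h₂, rfl⟩
    rcases h₁ with ⟨s₁, q₁, hs₁0, hs₁r, hq₁0, hq₁, rfl⟩ | ⟨s₁, q₁, hs₁0, hs₁r, hq₁0, hq₁, rfl⟩ <;>
      rcases h₂ with ⟨s₂, q₂, hs₂0, hs₂r, hq₂0, hq₂, rfl⟩ | ⟨s₂, q₂, hs₂0, hs₂r, hq₂0, hq₂, rfl⟩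
    · exact Or.inl <| Or.inl ⟨s₂ - s₁, q₁ - q₂, by omega, by omega, by omega, by omega, by
        simp only [Prod.mk_sub_mk, Prod.mk.injEq]; refine ⟨by ring, by ring, by ring⟩⟩
    · exact Or.inl <| Or.inr ⟨s₂ - s₁, q₁ - q₂, by omega, by omega, by omega, by omega, by
        simp only [Prod.mk_sub_mk, Prod.mk.injEq]; refine ⟨by ring, by ring, by ring⟩⟩
    · exact Or.inr ⟨s₂ - s₁, q₁ - q₂, by omega, by omega, by omega, by omega, by
        simp only [Prod.mk_sub_mk, Prod.mk.injEq]; refine ⟨by ring, by ring, by ring⟩⟩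
    · exact Or.inl <| Or.inl ⟨s₂ - s₁, q₁ - q₂, by omega, by omega, by omega, by omega, by
        simp only [Prod.mk_sub_mk, Prod.mk.injEq]; refine ⟨by ring, by ring, by ring⟩⟩
  · rintro ((⟨s, q, h1, h2, h3, h4, rfl⟩ | ⟨s, q, h1, h2, h3, h4, rfl⟩) |
      ⟨s, q, h1, h2, h3, h4, rfl⟩)
    · exact ⟨(-(max 0 (-s)), -(max 0 (-s)), (max 0 (-q) + q) - b * (max 0 (-s)) - (n - r)),
        Or.inl ⟨max 0 (-s), max 0 (-q) + q, by omega, by omega, by omega, by omega, rfl⟩,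
        (-(max 0 (-s) + s), -(max 0 (-s) + s), max 0 (-q) - b * (max 0 (-s) + s) - (n - r)),
        Or.inl ⟨max 0 (-s) + s, max 0 (-q), by omega, by omega, by omega, by omega, rfl⟩, by
          simp only [Prod.mk_sub_mk, Prod.mk.injEq]; refine ⟨by ring, by ring, by ring⟩⟩
    · exact ⟨(-(max 1 s - s), -(max 1 s - s), (max 0 (-q) + q) - b * (max 1 s - s) - (n - r)),
        Or.inl ⟨max 1 s - s, max 0 (-q) + q, by omega, by omega, by omega, by omega, rfl⟩,
        (-(max 1 s), -(max 1 s - 1), max 0 (-q) - b * (max 1 s) - (n - r)),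
        Or.inr ⟨max 1 s, max 0 (-q), by omega, by omega, by omega, by omega, rfl⟩, by
          simp only [Prod.mk_sub_mk, Prod.mk.injEq]; refine ⟨by ring, by ring, by ring⟩⟩
    · exact ⟨(-(max 1 (-s)), -(max 1 (-s) - 1), (max 0 (-q) + q) - b * (max 1 (-s)) - (n - r)),
        Or.inr ⟨max 1 (-s), max 0 (-q) + q, by omega, by omega, by omega, by omega, rfl⟩,
        (-(max 1 (-s) + s), -(max 1 (-s) + s), max 0 (-q) - b * (max 1 (-s) + s) - (n - r)),
        Or.inl ⟨max 1 (-s) + s, max 0 (-q), by omega, by omega, by omega, by omega, rfl⟩, by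
          simp only [Prod.mk_sub_mk, Prod.mk.injEq]; refine ⟨by ring, by ring, by ring⟩⟩
end

section
/- The set of all differences {d₁ − d₂ : d₁ ∈ Col₁, d₂ ∈ Col₂} equals Diff₂. -/
/-! The difference of the `Col₁` point with parameters `(s₁, q₁)` and the `Col₂` point with
parameters `(s₂, q₂)` is the `Diff₂` point with parameters `(s₂ - s₁, q₁ - q₂)`. So the claim is
that these parameter differences fill out exactly `[1, r] - [0, r] = [1 - r, r]` and
`[0, n - r] - [0, n - r - 1] = [r - n + 1, n - r]`: a difference of two nonempty intervals in a
linearly ordered group is again an interval. -/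

open Set Pointwise

theorem Set.Icc_sub_Icc {α : Type*} [AddCommGroup α] [LinearOrder α] [IsOrderedAddMonoid α]
    {a b c d : α} (hab : a ≤ b) (hcd : c ≤ d) : Icc a b - Icc c d = Icc (a - d) (b - c) := by
  ext x
  constructor
  · rintro ⟨u, ⟨hau, hub⟩, v, ⟨hcv, hvd⟩, rfl⟩
    exact ⟨sub_le_sub hau hvd, sub_le_sub hub hcv⟩
  · rintro ⟨hx₁, hx₂⟩
    refine ⟨max a (x + c), ⟨le_max_left _ _, max_le hab (le_sub_iff_add_le.mp hx₂)⟩,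
      max a (x + c) - x, ⟨?_, ?_⟩, sub_sub_cancel _ _⟩
    · exact le_sub_iff_add_le'.mpr (le_max_right _ _)
    · exact sub_le_iff_le_add'.mpr (max_le (sub_le_iff_le_add.mp hx₁) (add_le_add_right hcd x))

theorem col1_sub_col2 (n r b s₁ q₁ s₂ q₂ : ℤ) :
    ((-s₁, -s₁, q₁ - b * s₁ - (n - r)) : ℤ × ℤ × ℤ) - (-s₂, -(s₂ - 1), q₂ - b * s₂ - (n - r)) =
      (s₂ - s₁, s₂ - s₁ - 1, b * (s₂ - s₁) + (q₁ - q₂)) := by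
  simp only [Prod.mk_sub_mk, Prod.mk.injEq]
  exact ⟨by ring, by ring, by ring⟩

theorem diff_col1_col2_general (n r b : ℤ) :
    {p | ∃ d₁ ∈ Col1 n r b, ∃ d₂ ∈ Col2 n r b, p = d₁ - d₂} = Diff2 n r b := by
  ext p
  constructor
  · rintro ⟨_, ⟨s₁, q₁, hs₁0, hs₁r, hq₁0, hq₁, rfl⟩, _, ⟨s₂, q₂, hs₂1, hs₂r, hq₂0, hq₂, rfl⟩, rfl⟩
    exact ⟨s₂ - s₁, q₁ - q₂, by omega, by omega, by omega, by omega,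
      col1_sub_col2 n r b s₁ q₁ s₂ q₂⟩
  · rintro ⟨s, q, hs1, hsr, hq1, hq, rfl⟩
    have hs : s ∈ Icc 1 r - Icc 0 r := by
      rw [Icc_sub_Icc (by omega) (by omega)]; exact ⟨by omega, by omega⟩
    have hq : q ∈ Icc 0 (n - r) - Icc 0 (n - r - 1) := by
      rw [Icc_sub_Icc (by omega) (by omega)]; exact ⟨by omega, by omega⟩
    obtain ⟨s₂, ⟨hs₂1, hs₂r⟩, s₁, ⟨hs₁0, hs₁r⟩, rfl⟩ := hs
    obtain ⟨q₁, ⟨hq₁0, hq₁⟩, q₂, ⟨hq₂0, hq₂⟩, rfl⟩ := hq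
    exact ⟨_, ⟨s₁, q₁, hs₁0, hs₁r, hq₁0, hq₁, rfl⟩, _, ⟨s₂, q₂, hs₂1, hs₂r, hq₂0, hq₂, rfl⟩,
      (col1_sub_col2 n r b s₁ q₁ s₂ q₂).symm⟩

/-- The set of all differences `{d₁ - d₂ : d₁ ∈ Col₁, d₂ ∈ Col₂}`
equals `Diff₂`. -/
theorem diff_col1_col2 (n r b : ℤ) (hr : 1 ≤ r) (hrn : r ≤ n - 1) (hb : 0 ≤ b) :
    {p | ∃ d₁ ∈ Col1 n r b, ∃ d₂ ∈ Col2 n r b, p = d₁ - d₂} = Diff2 n r b :=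
  diff_col1_col2_general n r b
end

section
/- If (α₁, α₂, α₃¹, …, α₃ʳ, α₄, α₅) is an admissible tuple in which the entries α₃¹, …, α₃ʳ are all ≤ −1, then F(α) does not belong to Diff₁ ∪ Diff₂ ∪ Diff₃. -/
/-- The predicate `P` on `ℤ/5` holds exactly on a cyclically consecutive block of length `m`
(starting at some index `i`). -/
def IsCyclicBlock (P : Fin 5 → Prop) (m : ℕ) : Prop :=
  ∃ i : Fin 5, ∀ k : Fin 5, P k ↔ ∃ d : ℕ, d < m ∧ k = i + Fin.ofNat 5 d

/-- A tuple `(α₁, α₂, α₃¹, …, α₃ʳ, α₄, α₅)` (with `α₃ʲ = a3 j` for `1 ≤ j ≤ r`) is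
*admissible* if: the entries `α₃¹, …, α₃ʳ` are all `≤ -1` or all `≥ 0`; the set of negative
groups (group `3` being negative when all `α₃ʲ < 0`) is a cyclically consecutive block in
`(1,2,3,4,5)` of size exactly `2`, `3` or `5`; and if `α₁ < 0` then `α₁ ≤ -(n-r)`. -/
def Admissible (n r : ℤ) (α₁ α₂ α₄ α₅ : ℤ) (a3 : ℤ → ℤ) : Prop :=
  ((∀ j ∈ Finset.Icc 1 r, a3 j ≤ -1) ∨ (∀ j ∈ Finset.Icc 1 r, 0 ≤ a3 j)) ∧
  (∃ m ∈ ({2, 3, 5} : Set ℕ),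
    IsCyclicBlock ![α₁ < 0, α₂ < 0, ∀ j ∈ Finset.Icc 1 r, a3 j < 0, α₄ < 0, α₅ < 0] m) ∧
  (α₁ < 0 → α₁ ≤ -(n - r))

/-- `F(α) = (α₄ + Σ_{j=1}^r α₃ʲ, α₂ - α₅ + Σ_{j=1}^r α₃ʲ,
α₁ + b·α₃¹ + Σ_{j=2}^r (b - c_j)·α₃ʲ + α₅)`. -/
noncomputable def Fmap (r b : ℤ) (c : ℤ → ℤ) (α₁ α₂ α₄ α₅ : ℤ) (a3 : ℤ → ℤ) : ℤ × ℤ × ℤ :=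
  (α₄ + ∑ j ∈ Finset.Icc 1 r, a3 j,
   α₂ - α₅ + ∑ j ∈ Finset.Icc 1 r, a3 j,
   α₁ + b * a3 1 + (∑ j ∈ Finset.Icc 2 r, (b - c j) * a3 j) + α₅)

/-!
Write `S = Σⱼ α₃ʲ ≤ -r`. Group 3 is negative, so the negative block contains 3: either it
contains 4, and then the first coordinate `α₄ + S` of `F(α)` is `< -r`; or it ends at 3, and
then `α₂ < 0 ≤ α₄, α₅`, so the second coordinate is smaller than the first. Every point of
`Diff₁ ∪ Diff₃` has first coordinate `≥ -r` and second `≥` first, and every point of `Diff₂`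
has second = first `- 1` with first `≥ 1 - r`; both are incompatible with the above.
-/

theorem sum_Icc_one_le_neg_of_le_neg_one {r : ℤ} {a : ℤ → ℤ}
    (ha : ∀ j ∈ Finset.Icc 1 r, a j ≤ -1) : ∑ j ∈ Finset.Icc 1 r, a j ≤ -r :=
  calc ∑ j ∈ Finset.Icc 1 r, a j ≤ ∑ _j ∈ Finset.Icc 1 r, (-1 : ℤ) := Finset.sum_le_sum ha
    _ = -(r.toNat : ℤ) := by simp
    _ ≤ -r := by simp

theorem IsCyclicBlock.one_and_not_four_of_two_of_not_three {P : Fin 5 → Prop} {m : ℕ} (hm : m ∈ ({2, 3, 5} : Set ℕ))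
    (hP : IsCyclicBlock P m) (h2 : P 2) (h3 : ¬ P 3) : P 1 ∧ ¬ P 4 := by
  obtain ⟨i, hi⟩ := hP
  simp only [hi] at h2 h3 ⊢
  clear hi
  simp only [Set.mem_insert_iff, Set.mem_singleton_iff] at hm
  rcases hm with rfl | rfl | rfl <;> revert h2 h3 <;> revert i <;> decide

theorem fst_le_snd_or_of_mem_diff {n r b : ℤ} {p : ℤ × ℤ × ℤ}
    (hp : p ∈ Diff1 n r b ∪ Diff2 n r b ∪ Diff3 n r b) :
    -r ≤ p.1 ∧ (p.1 ≤ p.2.1 ∨ (p.2.1 = p.1 - 1 ∧ 1 - r ≤ p.1)) := by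
  rcases hp with (⟨s, q, _, _, _, _, rfl⟩ | ⟨s, q, _, _, _, _, rfl⟩) | ⟨s, q, _, _, _, _, rfl⟩ <;>
    dsimp only <;> omega

theorem fmap_not_in_diff_of_a3_neg_general (n r b : ℤ)
    (c : ℤ → ℤ)
    (α₁ α₂ α₄ α₅ : ℤ) (a3 : ℤ → ℤ)
    (hadm : Admissible n r α₁ α₂ α₄ α₅ a3)
    (hneg : ∀ j ∈ Finset.Icc (1 : ℤ) r, a3 j ≤ -1) :
    Fmap r b c α₁ α₂ α₄ α₅ a3 ∉ Diff1 n r b ∪ Diff2 n r b ∪ Diff3 n r b := by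
  obtain ⟨-, ⟨m, hm, hblock⟩, -⟩ := hadm
  have hS := sum_Icc_one_le_neg_of_le_neg_one hneg
  intro hp
  obtain ⟨hfst, hsnd⟩ := fst_le_snd_or_of_mem_diff hp
  simp only [Fmap] at hfst hsnd
  rcases lt_or_ge α₄ 0 with h4 | h4
  · omega
  · obtain ⟨h2, h5⟩ : α₂ < 0 ∧ ¬ α₅ < 0 :=
      hblock.one_and_not_four_of_two_of_not_three hm (fun j hj => (hneg j hj).trans_lt (by norm_num)) h4.not_gt
    omega

/-- If `(α₁, α₂, α₃¹, …, α₃ʳ, α₄, α₅)` is an admissible tuple in which the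
entries `α₃¹, …, α₃ʳ` are all `≤ -1`, then `F(α) ∉ Diff₁ ∪ Diff₂ ∪ Diff₃`. -/
theorem fmap_not_in_diff_of_a3_neg (n r b : ℤ) (hr : 1 ≤ r) (hrn : r ≤ n - 1) (hb : 0 ≤ b)
    (c : ℤ → ℤ) (hc : ∀ j ∈ Finset.Icc (2 : ℤ) r, 0 ≤ c j)
    (α₁ α₂ α₄ α₅ : ℤ) (a3 : ℤ → ℤ)
    (hadm : Admissible n r α₁ α₂ α₄ α₅ a3)
    (hneg : ∀ j ∈ Finset.Icc (1 : ℤ) r, a3 j ≤ -1) :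
    Fmap r b c α₁ α₂ α₄ α₅ a3 ∉ Diff1 n r b ∪ Diff2 n r b ∪ Diff3 n r b :=
  fmap_not_in_diff_of_a3_neg_general n r b c α₁ α₂ α₄ α₅ a3 hadm hneg
end

section
/- If (α₁, α₂, α₃¹, …, α₃ʳ, α₄, α₅) is an admissible tuple in which the entries α₃¹, …, α₃ʳ are all ≥ 0, then F(α) does not belong to Diff₃. -/
/-
A point of `Diff₃` has second coordinate one more than its first, which for `F(α)` means
`α₂ = α₄ + α₅ + 1`. Since group 3 is nonnegative, the negative groups form one of the blocks
`{1,2}`, `{4,5}`, `{5,1}`, `{4,5,1}`, `{5,1,2}`. In the first, second and fourth the signs of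
`α₂, α₄, α₅` contradict `α₂ = α₄ + α₅ + 1`. In the other two, `α₁ ≤ r - n`, `α₅ ≤ -1` and
`α₄ ≥ 0`; as `c_j α₃ʲ ≥ 0`, the third coordinate `b·s + q` (with `s = α₄ + Σα₃ʲ`) is at most
`α₁ + α₅ + b·Σα₃ʲ`, which forces `q ≤ α₁ + α₅ - b·α₄ < r - n`.
-/

open Finset

lemma exists_lt_and_eq_add_ofNat_iff {N : ℕ} [NeZero N] (i k : Fin N) (m : ℕ) :
    (∃ d : ℕ, d < m ∧ k = i + Fin.ofNat N d) ↔ (k - i).val < m := by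
  constructor
  · rintro ⟨d, hd, rfl⟩
    simp only [add_sub_cancel_left, Fin.val_ofNat]
    exact (Nat.mod_le d N).trans_lt hd
  · intro h
    exact ⟨(k - i).val, h, by simp⟩

lemma isCyclicBlock_iff {P : Fin 5 → Prop} {m : ℕ} :
    IsCyclicBlock P m ↔ ∃ i : Fin 5, ∀ k : Fin 5, P k ↔ (k - i).val < m := by
  simp only [IsCyclicBlock, exists_lt_and_eq_add_ofNat_iff]

lemma IsCyclicBlock.signs_of_not_two {P : Fin 5 → Prop} {m : ℕ} (hm : m ∈ ({2, 3, 5} : Set ℕ))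
    (hP : IsCyclicBlock P m) (h2 : ¬ P 2) :
    (P 1 ∧ ¬ P 3 ∧ ¬ P 4) ∨ (¬ P 1 ∧ P 3 ∧ P 4) ∨ (P 0 ∧ ¬ P 3 ∧ P 4) := by
  obtain ⟨i, hi⟩ := isCyclicBlock_iff.mp hP
  simp only [hi] at h2 ⊢
  clear hi hP
  rcases hm with rfl | rfl | rfl <;> revert i <;> decide

lemma mul_add_sum_sub_mul_le_mul_sum {r b : ℤ} {c a : ℤ → ℤ} (hr : 1 ≤ r)
    (hc : ∀ j ∈ Icc 2 r, 0 ≤ c j) (ha : ∀ j ∈ Icc 2 r, 0 ≤ a j) :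
    b * a 1 + ∑ j ∈ Icc 2 r, (b - c j) * a j ≤ b * ∑ j ∈ Icc 1 r, a j := by
  rw [← insert_Icc_add_one_left_eq_Icc hr, one_add_one_eq_two, sum_insert (by simp), mul_add,
    mul_sum]
  gcongr with j hj
  · exact ha j hj
  · exact sub_le_self b (hc j hj)

lemma eq_add_add_one_and_le_of_Fmap_mem_Diff3 {n r b : ℤ} {c : ℤ → ℤ} {α₁ α₂ α₄ α₅ : ℤ}
    {a3 : ℤ → ℤ} (h : Fmap r b c α₁ α₂ α₄ α₅ a3 ∈ Diff3 n r b) :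
    α₂ = α₄ + α₅ + 1 ∧
      r - n + b * (α₄ + ∑ j ∈ Icc 1 r, a3 j) ≤
        α₁ + b * a3 1 + (∑ j ∈ Icc 2 r, (b - c j) * a3 j) + α₅ := by
  obtain ⟨s, q, -, -, hq, -, hF⟩ := h
  simp only [Fmap, Prod.mk.injEq] at hF
  obtain ⟨hs, hs', hbs⟩ := hF
  constructor
  · linarith
  · rw [hbs, hs]; linarith

theorem fmap_not_in_diff3_of_a3_nonneg_general (n r b : ℤ) (hr : 1 ≤ r) (hb : 0 ≤ b)
    (c : ℤ → ℤ) (hc : ∀ j ∈ Finset.Icc (2 : ℤ) r, 0 ≤ c j)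
    (α₁ α₂ α₄ α₅ : ℤ) (a3 : ℤ → ℤ)
    (hadm : Admissible n r α₁ α₂ α₄ α₅ a3)
    (hpos : ∀ j ∈ Finset.Icc (1 : ℤ) r, 0 ≤ a3 j) :
    Fmap r b c α₁ α₂ α₄ α₅ a3 ∉ Diff3 n r b := by
  obtain ⟨-, ⟨m, hm, hblock⟩, hα₁⟩ := hadm
  have h1r : (1 : ℤ) ∈ Icc 1 r := mem_Icc.mpr ⟨le_rfl, hr⟩
  have hgroup3 : ¬ ∀ j ∈ Icc 1 r, a3 j < 0 := fun h ↦ (hpos 1 h1r).not_gt (h 1 h1r)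
  intro hmem
  obtain ⟨hα₂, hthird⟩ := eq_add_add_one_and_le_of_Fmap_mem_Diff3 hmem
  have hsum := mul_add_sum_sub_mul_le_mul_sum (b := b) hr hc
    fun j hj ↦ hpos j (Icc_subset_Icc_left one_le_two hj)
  rcases hblock.signs_of_not_two hm hgroup3 with
    (h : α₂ < 0 ∧ ¬ α₄ < 0 ∧ ¬ α₅ < 0) | (h : ¬ α₂ < 0 ∧ α₄ < 0 ∧ α₅ < 0) |
    ⟨(h1 : α₁ < 0), (h4 : ¬ α₄ < 0), (h5 : α₅ < 0)⟩
  · omega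
  · omega
  · linarith [hα₁ h1, mul_nonneg hb (not_lt.mp h4)]

/-- If `(α₁, α₂, α₃¹, …, α₃ʳ, α₄, α₅)` is an admissible tuple in which the
entries `α₃¹, …, α₃ʳ` are all `≥ 0`, then `F(α) ∉ Diff₃`. -/
theorem fmap_not_in_diff3_of_a3_nonneg (n r b : ℤ) (hr : 1 ≤ r) (hrn : r ≤ n - 1) (hb : 0 ≤ b)
    (c : ℤ → ℤ) (hc : ∀ j ∈ Finset.Icc (2 : ℤ) r, 0 ≤ c j)
    (α₁ α₂ α₄ α₅ : ℤ) (a3 : ℤ → ℤ)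
    (hadm : Admissible n r α₁ α₂ α₄ α₅ a3)
    (hpos : ∀ j ∈ Finset.Icc (1 : ℤ) r, 0 ≤ a3 j) :
    Fmap r b c α₁ α₂ α₄ α₅ a3 ∉ Diff3 n r b :=
  fmap_not_in_diff3_of_a3_nonneg_general n r b hr hb c hc α₁ α₂ α₄ α₅ a3 hadm hpos
end

section
/- Let V be a finite set partitioned into five pairwise disjoint subsets X₀, X₁, X₂, X₃, X₄ with |X₀| = 1, |X₁| = k, |X₂| = 1, |X₃| = k, |X₄| = k, where k ≥ 1 is an integer, and for i ∈ ℤ/5ℤ set Yᵢ = Xᵢ ∪ Xᵢ₊₁ (indices modulo 5). Then the number of (3k−1)-element subsets S ⊆ V such that Yᵢ ⊄ S for every i equals k³ + 2k² + 2k. -/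
/-!
Passing to complements, the sets counted are the 3-element sets `T` meeting every `Yᵢ`. Let
`f : V → ℤ/5` record the block `Xᵢ` of a point; `T` meets `Yᵢ` iff `f(T)` contains `i` or
`i + 1`, i.e. iff `f(T)` is a vertex cover of the 5-cycle. Such a cover has at least 3 vertices,
so `f` is injective on `T` and `f(T)` is one of the five 3-element covers, the complements of the
non-edges `{i, i + 2}`. The sets `T` over a given cover `I` are the choices of one point in each
`Xᵢ`, `i ∈ I`, so there are `∏ i ∈ I, |Xᵢ|` of them. The covers `{1,3,4}`, `{0,1,3}`,
`{1,2,4}`, `{0,2,4}`, `{0,2,3}` contribute `k³ + k² + k² + k + k`.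
-/

open Finset

section

variable {α ι : Type*} [Fintype α]

theorem exists_eq_fiber_of_pairwise_disjoint_of_cover [DecidableEq ι] (X : ι → Finset α)
    (hdisj : ∀ i j, i ≠ j → Disjoint (X i) (X j)) (hcover : ∀ a, ∃ i, a ∈ X i) :
    ∃ f : α → ι, ∀ i, X i = ({a | f a = i} : Finset α) := by
  choose f hf using hcover
  refine ⟨f, fun i => ?_⟩
  ext a
  simp only [mem_filter, mem_univ, true_and]
  refine ⟨fun ha => ?_, fun h => h ▸ hf a⟩
  by_contra hne
  exact disjoint_left.mp (hdisj _ _ hne) (hf a) ha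

theorem ncard_forall_not_subset_eq_ncard_forall_not_disjoint [DecidableEq α] (Y : ι → Finset α)
    {m r : ℕ} (h : m + r = Fintype.card α) :
    {S : Finset α | #S = m ∧ ∀ i, ¬ Y i ⊆ S}.ncard =
      {T : Finset α | #T = r ∧ ∀ i, ¬ Disjoint (Y i) T}.ncard := by
  refine Set.ncard_congr (fun S _ => Sᶜ) (fun S hS => ?_) (fun S₁ S₂ _ _ => compl_inj_iff.mp)
    fun T hT => ⟨Tᶜ, ?_, compl_compl T⟩
  · simp only [Set.mem_ofPred_eq, card_compl, disjoint_compl_right_iff] at hS ⊢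
    exact ⟨by omega, hS.2⟩
  · simp only [Set.mem_ofPred_eq, card_compl] at hT ⊢
    refine ⟨by omega, fun i hi => hT.2 i ?_⟩
    rwa [← compl_compl T, disjoint_compl_right_iff]

theorem card_injOn_and_image_eq_eq_prod_card_fiber [DecidableEq α] [DecidableEq ι] (f : α → ι)
    (I : Finset ι) :
    #{T : Finset α | Set.InjOn f T ∧ T.image f = I} = ∏ i ∈ I, #{a | f a = i} := by
  have hchoices : ∏ i ∈ I, #{a | f a = i} = #(univ : Finset ((i : I) → {a // f a = i})) := by
    simp only [card_univ, Fintype.card_pi, Fintype.card_subtype]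
    exact (prod_coe_sort I fun i => #{a | f a = i}).symm
  rw [hchoices, eq_comm]
  refine card_bij (fun g _ => univ.image fun i => (g i : α)) ?_ ?_ ?_
  · intro g _
    simp only [mem_filter, mem_univ, true_and]
    constructor
    · rintro _ hx _ hy hxy
      simp only [coe_image, coe_univ, Set.image_univ, Set.mem_range] at hx hy
      obtain ⟨i, rfl⟩ := hx
      obtain ⟨j, rfl⟩ := hy
      have hij : i = j := Subtype.ext (by rw [← (g i).2, ← (g j).2, hxy])
      rw [hij]
    · ext i
      simp [image_image, Function.comp_def, (g _).2]
  · intro g₁ _ g₂ _ h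
    funext i
    have hi : (g₁ i : α) ∈ univ.image fun i => (g₂ i : α) :=
      h ▸ mem_image_of_mem _ (mem_univ i)
    obtain ⟨j, -, hj⟩ := mem_image.mp hi
    have hij : j = i := Subtype.ext (by rw [← (g₁ i).2, ← (g₂ j).2, hj])
    exact Subtype.ext (hij ▸ hj).symm
  · intro T hT
    simp only [mem_filter, mem_univ, true_and] at hT
    obtain ⟨hinj, rfl⟩ := hT
    have hpick : ∀ i : T.image f, ∃ a ∈ T, f a = i := fun i => mem_image.mp i.2
    choose g hgT hgf using hpick
    refine ⟨fun i => ⟨g i, hgf i⟩, mem_univ _, ?_⟩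
    ext t
    simp only [mem_image, mem_univ, true_and]
    refine ⟨by rintro ⟨i, rfl⟩; exact hgT i, fun ht => ?_⟩
    exact ⟨⟨f t, mem_image_of_mem f ht⟩, hinj (hgT _) ht (hgf _)⟩

theorem ncard_card_eq_and_image_eq_sum_prod_card_fiber [DecidableEq α] [DecidableEq ι]
    [Fintype ι] (f : α → ι) (P : Finset ι → Prop) [DecidablePred P] (r : ℕ)
    (hP : ∀ I, P I → r ≤ #I) :
    {T : Finset α | #T = r ∧ P (T.image f)}.ncard =
      ∑ I with #I = r ∧ P I, ∏ i ∈ I, #{a | f a = i} := by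
  rw [← coe_filter_univ, Set.ncard_coe_finset,
    card_eq_sum_card_fiberwise (f := fun T => T.image f) (t := {I | #I = r ∧ P I})]
  · refine sum_congr rfl fun I hI => ?_
    simp only [mem_filter, mem_univ, true_and] at hI
    rw [← card_injOn_and_image_eq_eq_prod_card_fiber]
    congr 1
    ext T
    simp only [mem_filter, mem_univ, true_and]
    constructor
    · rintro ⟨⟨hT, -⟩, rfl⟩
      exact ⟨card_image_iff.mp (hI.1.trans hT.symm), rfl⟩
    · rintro ⟨hinj, rfl⟩
      exact ⟨⟨(card_image_of_injOn hinj).symm.trans hI.1, hI.2⟩, rfl⟩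
  · intro T hT
    simp only [coe_filter, mem_univ, true_and, Set.mem_ofPred_eq] at hT ⊢
    exact ⟨le_antisymm (hT.1 ▸ card_image_le) (hP _ hT.2), hT.2⟩

theorem not_disjoint_fiber_union_iff [DecidableEq α] [DecidableEq ι] (f : α → ι) (i j : ι)
    (T : Finset α) :
    ¬ Disjoint (({a | f a = i} : Finset α) ∪ ({a | f a = j} : Finset α)) T ↔
      i ∈ T.image f ∨ j ∈ T.image f := by
  simp only [not_disjoint_iff, mem_union, mem_filter, mem_univ, true_and, mem_image]
  grind

end

def IsCycleVertexCover {n : ℕ} [NeZero n] (I : Finset (Fin n)) : Prop :=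
  ∀ i, i ∈ I ∨ i + 1 ∈ I

instance {n : ℕ} [NeZero n] : DecidablePred (IsCycleVertexCover (n := n)) :=
  fun _ => inferInstanceAs (Decidable (∀ _, _))

theorem IsCycleVertexCover.three_le_card {I : Finset (Fin 5)} (h : IsCycleVertexCover I) :
    3 ≤ #I := by
  revert I; decide

theorem filter_card_eq_three_isCycleVertexCover :
    ({I | #I = 3 ∧ IsCycleVertexCover I} : Finset (Finset (Fin 5))) =
      {{1, 3, 4}, {0, 2, 4}, {0, 1, 3}, {1, 2, 4}, {0, 2, 3}} := by
  decide

/-- Let `V` (here: the type `α`) be a finite set partitioned into five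
pairwise disjoint subsets `X 0, …, X 4` with `|X 0| = 1`, `|X 1| = k`, `|X 2| = 1`,
`|X 3| = k`, `|X 4| = k`, where `k ≥ 1`, and `Y i = X i ∪ X (i+1)` (indices mod 5).
Then the number of `(3k-1)`-element subsets `S ⊆ V` with `Y i ⊄ S` for every `i` equals
`k³ + 2k² + 2k`. -/
theorem maximal_cone_count_example {α : Type*} [Fintype α] [DecidableEq α]
    (k : ℕ) (hk : 1 ≤ k)
    (X : Fin 5 → Finset α)
    (hdisj : ∀ i j : Fin 5, i ≠ j → Disjoint (X i) (X j))
    (hcover : ∀ a : α, ∃ i : Fin 5, a ∈ X i)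
    (h0 : (X 0).card = 1) (h1 : (X 1).card = k) (h2 : (X 2).card = 1)
    (h3 : (X 3).card = k) (h4 : (X 4).card = k) :
    {S : Finset α | S.card = 3 * k - 1 ∧ ∀ i : Fin 5, ¬ (X i ∪ X (i + 1)) ⊆ S}.ncard
      = k ^ 3 + 2 * k ^ 2 + 2 * k := by
  obtain ⟨f, hX⟩ := exists_eq_fiber_of_pairwise_disjoint_of_cover X hdisj hcover
  have hsize : (fun i => #{a | f a = i}) = ![1, k, 1, k, k] := by
    funext i; rw [← hX]; fin_cases i <;> assumption
  have hcard : Fintype.card α = 3 * k + 2 := by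
    rw [← card_univ, card_eq_sum_card_fiberwise (f := f) (t := univ) (fun _ _ => mem_univ _)]
    simp only [Fin.sum_univ_five, ← hX, h0, h1, h2, h3, h4]
    ring
  rw [ncard_forall_not_subset_eq_ncard_forall_not_disjoint (fun i => X i ∪ X (i + 1)) (r := 3)
    (by omega)]
  simp only [hX, not_disjoint_fiber_union_iff]
  refine (ncard_card_eq_and_image_eq_sum_prod_card_fiber f IsCycleVertexCover 3
    fun _ => IsCycleVertexCover.three_le_card).trans ?_
  rw [filter_card_eq_three_isCycleVertexCover, hsize]
  simp +decide only [mem_insert, mem_singleton, not_false_eq_true, sum_insert, prod_insert,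
    sum_singleton, prod_singleton, Matrix.cons_val, one_mul]
  ring
end
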